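/- arXiv:2103.04470 — 2 statements merged into one kernel-verified Lean document; each statement's English description precedes it below -/
import Mathlib

section
/- Let X be a metric space with n = 2k+2 points (k ≥ 0). Then t_d(X) − t_b(X) ≤ sep(X), where sep(X) = min_{x ≠ x'} d_X(x, x') is the minimal positive distance in X. -/
/-- The largest distance from `x` to any point of `X`. -/
noncomputable def ptTd (X : Type*) [MetricSpace X] (x : X) : ℝ :=
  sSup (Set.range fun y => dist x y)

/-- The second largest distance (counted with multiplicity over points) from `x`
to points of `X`. -/
noncomputable def ptTb (X : Type*) [MetricSpace X] (x : X) : ℝ :=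
  sSup {r : ℝ | ∃ y z : X, y ≠ z ∧ r = min (dist x y) (dist x z)}

/-- `t_b(X) = max_{x ∈ X} t_b(x)`. -/
noncomputable def tbX (X : Type*) [MetricSpace X] : ℝ :=
  sSup (Set.range (ptTb X))

/-- `t_d(X) = min_{x ∈ X} t_d(x)`. -/
noncomputable def tdX (X : Type*) [MetricSpace X] : ℝ :=
  sInf (Set.range (ptTd X))

/-! Fix distinct points `a, b` and let `m` be a point farthest from `a`, so that
`t_d(X) ≤ d(a, m)`. The pair `a, b` witnesses `min (d(m, a), d(m, b)) ≤ t_b(m) ≤ t_b(X)`.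
If the minimum is `d(m, a)` then already `t_d(X) ≤ t_b(X)`; otherwise
`d(a, m) ≤ d(a, b) + d(b, m) ≤ d(a, b) + t_b(X)`. Hence `t_d(X) - t_b(X)` is a lower
bound for all distances between distinct points. -/

section

variable {X : Type*} [MetricSpace X]

lemma ptTd_nonneg (x : X) : 0 ≤ ptTd X x :=
  Real.sSup_nonneg <| by rintro _ ⟨y, rfl⟩; exact dist_nonneg

lemma ptTb_nonneg (x : X) : 0 ≤ ptTb X x :=
  Real.sSup_nonneg <| by rintro _ ⟨y, z, -, rfl⟩; exact le_min dist_nonneg dist_nonneg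

lemma tbX_nonneg : 0 ≤ tbX X :=
  Real.sSup_nonneg <| by rintro _ ⟨x, rfl⟩; exact ptTb_nonneg x

lemma tdX_le_ptTd (x : X) : tdX X ≤ ptTd X x :=
  csInf_le ⟨0, by rintro _ ⟨y, rfl⟩; exact ptTd_nonneg y⟩ ⟨x, rfl⟩

lemma tdX_nonpos_of_subsingleton [Subsingleton X] : tdX X ≤ 0 :=
  Real.sInf_nonpos <| by
    rintro _ ⟨x, rfl⟩
    exact Real.sSup_nonpos <| by
      rintro _ ⟨y, rfl⟩
      exact (dist_eq_zero.2 (Subsingleton.elim x y)).le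

variable [CompactSpace X]

lemma exists_ptTd_eq_dist [Nonempty X] (x : X) : ∃ m, ptTd X x = dist x m := by
  obtain ⟨m, -, hm⟩ := isCompact_univ.exists_isMaxOn Set.univ_nonempty
    (continuous_const.dist continuous_id).continuousOn (f := fun y : X => dist x y)
  exact ⟨m, IsGreatest.csSup_eq ⟨⟨m, rfl⟩, by rintro _ ⟨y, rfl⟩; exact hm trivial⟩⟩

lemma diam_mem_upperBounds_min_dist (x : X) :
    Metric.diam (Set.univ : Set X) ∈
      upperBounds {r : ℝ | ∃ y z : X, y ≠ z ∧ r = min (dist x y) (dist x z)} := by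
  rintro _ ⟨y, z, -, rfl⟩
  exact (min_le_left _ _).trans
    (Metric.dist_le_diam_of_mem isCompact_univ.isBounded trivial trivial)

lemma min_dist_le_ptTb {y z : X} (hyz : y ≠ z) (x : X) :
    min (dist x y) (dist x z) ≤ ptTb X x :=
  le_csSup ⟨_, diam_mem_upperBounds_min_dist x⟩ ⟨y, z, hyz, rfl⟩

lemma ptTb_le_tbX (x : X) : ptTb X x ≤ tbX X :=
  le_csSup ⟨_, by
    rintro _ ⟨y, rfl⟩
    exact Real.sSup_le (diam_mem_upperBounds_min_dist y) Metric.diam_nonneg⟩ ⟨x, rfl⟩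

lemma tdX_le_tbX_add_dist {a b : X} (hab : a ≠ b) : tdX X ≤ tbX X + dist a b := by
  have : Nonempty X := ⟨a⟩
  obtain ⟨m, hm⟩ := exists_ptTd_eq_dist a
  have htd : tdX X ≤ dist m a := dist_comm a m ▸ hm ▸ tdX_le_ptTd a
  have htb : min (dist m a) (dist m b) ≤ tbX X :=
    (min_dist_le_ptTb hab m).trans (ptTb_le_tbX m)
  rcases le_total (dist m a) (dist m b) with h | h
  · rw [min_eq_left h] at htb
    linarith [dist_nonneg (x := a) (y := b)]
  · rw [min_eq_right h] at htb
    linarith [dist_triangle_right m a b]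

end

theorem tdX_sub_tbX_le_sep_general (X : Type*) [MetricSpace X] [Fintype X] :
    tdX X - tbX X ≤ sInf {r : ℝ | ∃ x y : X, x ≠ y ∧ r = dist x y} := by
  rcases subsingleton_or_nontrivial X with _ | ⟨a, b, hab⟩
  · have hsep : {r : ℝ | ∃ x y : X, x ≠ y ∧ r = dist x y} = ∅ :=
      Set.eq_empty_of_forall_notMem fun _ ⟨x, y, hxy, _⟩ => hxy (Subsingleton.elim x y)
    rw [hsep, Real.sInf_empty]
    linarith [tdX_nonpos_of_subsingleton (X := X), tbX_nonneg (X := X)]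
  · refine le_csInf ⟨dist a b, a, b, hab, rfl⟩ ?_
    rintro _ ⟨x, y, hxy, rfl⟩
    linarith [tdX_le_tbX_add_dist hxy]

/-- In a metric space with `2k+2` points, `t_d(X) - t_b(X) ≤ sep(X)`,
where `sep(X)` is the minimal distance between distinct points. -/
theorem tdX_sub_tbX_le_sep (X : Type*) [MetricSpace X] [Fintype X] (k : ℕ)
    (hcard : Fintype.card X = 2 * k + 2) :
    tdX X - tbX X ≤ sInf {r : ℝ | ∃ x y : X, x ≠ y ∧ r = dist x y} :=
  tdX_sub_tbX_le_sep_general X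
end

section
/- For every pair (t_b, t_d) with 0 < t_b < t_d ≤ √2·t_b, there exists a four-point subset X of the Euclidean plane ℝ² with t_b(X) = t_b and t_d(X) = t_d. Conversely, every four-point subset X ⊆ ℝ² with t_b(X) < t_d(X) satisfies t_d(X) ≤ √2·t_b(X). -/
/-! If `t_b(X) < t_d(X)`, every point `x` has exactly one point farther than `t_b(X)` from it,
namely a farthest point `x'`. For a point `a`, a third point `c` and their farthest points
`a'`, `c'`, the four distances between `{a, a'}` and `{c, c'}` are then at most `t_b`, while
`|aa'|, |cc'| ≥ t_d`, so Ptolemy's inequality gives `t_d² ≤ |aa'|·|cc'| ≤ 2 t_b²`.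
Conversely, a rectangle with sides `b` and `√(d² - b²)` has `t_b = b` and `t_d = d`. -/

section FiniteMetricSpace

variable {X : Type*} [MetricSpace X] [Finite X]

lemma dist_le_ptTd (x y : X) : dist x y ≤ ptTd X x :=
  le_csSup (Set.finite_range _).bddAbove ⟨y, rfl⟩

lemma exists_tdX_le_dist [Nonempty X] (x : X) : ∃ y, tdX X ≤ dist x y := by
  obtain ⟨y, hy⟩ := (Set.range_nonempty fun y => dist x y).csSup_mem (Set.finite_range _)
  have hbdd : BddBelow (Set.range (ptTd X)) :=
    ⟨0, by rintro _ ⟨z, rfl⟩; exact dist_nonneg.trans (dist_le_ptTd z z)⟩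
  exact ⟨y, (csInf_le hbdd ⟨x, rfl⟩).trans_eq hy.symm⟩

lemma min_dist_le_tbX {x y z : X} (h : y ≠ z) : min (dist x y) (dist x z) ≤ tbX X := by
  have hbdd : BddAbove {r : ℝ | ∃ y z : X, y ≠ z ∧ r = min (dist x y) (dist x z)} :=
    ⟨ptTd X x, by rintro _ ⟨y, z, -, rfl⟩; exact (min_le_left _ _).trans (dist_le_ptTd x y)⟩
  exact (le_csSup hbdd ⟨y, z, h, rfl⟩).trans (le_csSup (Set.finite_range _).bddAbove ⟨x, rfl⟩)

lemma eq_of_tbX_lt_dist {x y z : X} (hy : tbX X < dist x y) (hz : tbX X < dist x z) : y = z := by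
  by_contra h
  exact (lt_min hy hz).not_ge (min_dist_le_tbX h)

end FiniteMetricSpace

def IsPtolemaic (X : Type*) [MetricSpace X] : Prop :=
  ∀ a b c d : X, dist a c * dist b d ≤ dist a b * dist c d + dist b c * dist a d

lemma IsPtolemaic.subtype {X : Type*} [MetricSpace X] (h : IsPtolemaic X) (p : X → Prop) :
    IsPtolemaic (Subtype p) :=
  fun a b c d => h a b c d

lemma EuclideanGeometry.isPtolemaic {V P : Type*} [NormedAddCommGroup V] [InnerProductSpace ℝ V]
    [MetricSpace P] [NormedAddTorsor V P] : IsPtolemaic P :=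
  mul_dist_le_mul_dist_add_mul_dist

theorem tdX_le_sqrt_two_mul_tbX {X : Type*} [MetricSpace X] [Finite X] (hX : IsPtolemaic X)
    (hcard : 2 < Nat.card X) (hlt : tbX X < tdX X) : tdX X ≤ √2 * tbX X := by
  have : Nonempty X := Finite.card_pos_iff.1 (by omega)
  obtain ⟨a⟩ := ‹Nonempty X›
  obtain ⟨a', ha'⟩ := exists_tdX_le_dist a
  obtain ⟨c, hca, hca'⟩ := ENat.exists_ne_ne_of_three_le
    (by rw [ENat.card_eq_coe_natCard]; exact_mod_cast hcard) a a'
  obtain ⟨c', hc'⟩ := exists_tdX_le_dist c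
  set t := tbX X
  have far_a : t < dist a a' := hlt.trans_le ha'
  have far_c : t < dist c c' := hlt.trans_le hc'
  -- A longer side would be a second point far from one of its endpoints.
  have side_ac : dist a c ≤ t := not_lt.1 fun h => hca' (eq_of_tbX_lt_dist h far_a)
  have side_ca' : dist c a' ≤ t := not_lt.1 fun h =>
    hca (eq_of_tbX_lt_dist (x := a') (by rwa [dist_comm]) (by rwa [dist_comm]))
  have side_ac' : dist a c' ≤ t := not_lt.1 fun h =>
    side_ca'.not_gt (eq_of_tbX_lt_dist h far_a ▸ far_c)
  have side_a'c' : dist a' c' ≤ t := not_lt.1 fun h =>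
    side_ac.not_gt (dist_comm a c ▸ eq_of_tbX_lt_dist h (dist_comm a a' ▸ far_a) ▸ far_c)
  have ht : 0 ≤ t := dist_nonneg.trans side_ac
  have hsq : tdX X ^ 2 ≤ (√2 * t) ^ 2 := calc
    tdX X ^ 2 ≤ dist a a' * dist c c' := by
      rw [sq]; exact mul_le_mul ha' hc' (ht.trans hlt.le) dist_nonneg
    _ ≤ dist a c * dist a' c' + dist c a' * dist a c' := hX a c a' c'
    _ ≤ t * t + t * t :=
      add_le_add (mul_le_mul side_ac side_a'c' dist_nonneg ht)
        (mul_le_mul side_ca' side_ac' dist_nonneg ht)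
    _ = (√2 * t) ^ 2 := by rw [mul_pow, Real.sq_sqrt zero_le_two]; ring
  exact le_of_sq_le_sq hsq (by positivity)

section MetricSpace

variable {X : Type*} [MetricSpace X]

lemma tbX_eq_and_tdX_eq_of_forall_partner [Nonempty X] {b d : ℝ} (hbd : b ≤ d)
    (h : ∀ x : X, ∃ x', dist x x' = d ∧ (∃ y ≠ x', dist x y = b) ∧ ∀ y ≠ x', dist x y ≤ b) :
    tbX X = b ∧ tdX X = d := by
  have hle : ∀ x y : X, dist x y ≤ d := fun x y => by
    obtain ⟨x', hx', -, hle⟩ := h x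
    obtain rfl | hy := eq_or_ne y x'
    exacts [hx'.le, (hle y hy).trans hbd]
  have hTd : ∀ x, ptTd X x = d := fun x => by
    obtain ⟨x', hx', -⟩ := h x
    exact IsGreatest.csSup_eq ⟨⟨x', hx'⟩, by rintro _ ⟨y, rfl⟩; exact hle x y⟩
  have hTb : ∀ x, ptTb X x = b := fun x => by
    obtain ⟨x', hx', ⟨y, hyx', hy⟩, hle⟩ := h x
    refine IsGreatest.csSup_eq ⟨⟨y, x', hyx', by rw [hy, hx', min_eq_left hbd]⟩, ?_⟩
    rintro _ ⟨y, z, hyz, rfl⟩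
    obtain rfl | hy := eq_or_ne y x'
    exacts [(min_le_right _ _).trans (hle z hyz.symm), (min_le_left _ _).trans (hle y hy)]
  constructor
  · rw [tbX, funext hTb, Set.range_const, csSup_singleton]
  · rw [tdX, funext hTd, Set.range_const, csInf_singleton]

lemma exists_card_eq_four_tbX_eq_tdX_eq {A B C D : X} {q b d : ℝ} (hq : 0 < q) (hqb : q ≤ b)
    (hbd : b < d) (hAB : dist A B = b) (hAC : dist A C = q) (hAD : dist A D = d)
    (hBC : dist B C = d) (hBD : dist B D = q) (hCD : dist C D = b) :
    ∃ s : Finset X, s.card = 4 ∧ tbX s = b ∧ tdX s = d := by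
  classical
  have hb : 0 < b := hq.trans_le hqb
  have hd : 0 < d := hb.trans hbd
  have nAB : A ≠ B := dist_pos.1 (hAB ▸ hb)
  have nAC : A ≠ C := dist_pos.1 (hAC ▸ hq)
  have nAD : A ≠ D := dist_pos.1 (hAD ▸ hd)
  have nBC : B ≠ C := dist_pos.1 (hBC ▸ hd)
  have nBD : B ≠ D := dist_pos.1 (hBD ▸ hq)
  have nCD : C ≠ D := dist_pos.1 (hCD ▸ hb)
  refine ⟨{A, B, C, D}, Finset.card_eq_four.2 ⟨A, B, C, D, nAB, nAC, nAD, nBC, nBD, nCD, rfl⟩, ?_⟩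
  have : Nonempty ({A, B, C, D} : Finset X) := ⟨⟨A, by simp⟩⟩
  refine tbX_eq_and_tdX_eq_of_forall_partner hbd.le ?_
  have hBA : dist B A = b := by rw [dist_comm, hAB]
  have hCA : dist C A = q := by rw [dist_comm, hAC]
  have hDA : dist D A = d := by rw [dist_comm, hAD]
  have hCB : dist C B = d := by rw [dist_comm, hBC]
  have hDB : dist D B = q := by rw [dist_comm, hBD]
  have hDC : dist D C = b := by rw [dist_comm, hCD]
  rintro ⟨x, hx⟩
  simp only [Subtype.exists, Subtype.forall, Subtype.dist_eq, ne_eq, Subtype.mk.injEq,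
    Finset.mem_insert, Finset.mem_singleton, exists_prop, exists_eq_or_imp, exists_eq_left,
    forall_eq_or_imp, forall_eq] at hx ⊢
  rcases hx with rfl | rfl | rfl | rfl <;>
    simp [*, nAB.symm, nAC.symm, nAD.symm, nBC.symm, nBD.symm, nCD.symm, hb.ne, hd.ne, hbd.ne,
      hbd.ne', (hqb.trans_lt hbd).ne, hb.le]

end MetricSpace

lemma exists_plane_card_eq_four_tbX_eq_tdX_eq {b d : ℝ} (hb : 0 < b) (hbd : b < d)
    (hd : d ≤ √2 * b) :
    ∃ s : Finset (EuclideanSpace ℝ (Fin 2)), s.card = 4 ∧ tbX s = b ∧ tdX s = d := by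
  have hdist (x₁ y₁ x₂ y₂ : ℝ) :
      dist !₂[x₁, y₁] !₂[x₂, y₂] = √((x₁ - x₂) ^ 2 + (y₁ - y₂) ^ 2) := by
    simp [EuclideanSpace.dist_eq, Fin.sum_univ_two, Real.dist_eq, sq_abs]
  have hd2 : d ^ 2 ≤ 2 * b ^ 2 := by
    simpa [mul_pow, Real.sq_sqrt zero_le_two] using pow_le_pow_left₀ (hb.trans hbd).le hd 2
  set q := √(d ^ 2 - b ^ 2)
  have hq2 : q ^ 2 = d ^ 2 - b ^ 2 := Real.sq_sqrt (by nlinarith)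
  have hq : 0 < q := Real.sqrt_pos.2 (by nlinarith)
  have hqb : q ≤ b := by nlinarith
  apply exists_card_eq_four_tbX_eq_tdX_eq (A := !₂[0, 0]) (B := !₂[b, 0]) (C := !₂[0, q])
    (D := !₂[b, q]) hq hqb hbd
  all_goals
    rw [hdist, Real.sqrt_eq_iff_mul_self_eq_of_pos (by linarith)]
    nlinarith

/-- Characterization of the principal persistence set of the Euclidean plane:
the pairs `(t_b(X), t_d(X))` realized by four-point subsets `X ⊆ ℝ²` with
`t_b(X) < t_d(X)` are exactly the pairs with `0 < t_b < t_d ≤ √2 · t_b`. -/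
theorem plane_tb_td_characterization :
    (∀ b d : ℝ, 0 < b → b < d → d ≤ Real.sqrt 2 * b →
      ∃ s : Finset (EuclideanSpace ℝ (Fin 2)),
        s.card = 4 ∧ tbX ↥s = b ∧ tdX ↥s = d) ∧
    (∀ s : Finset (EuclideanSpace ℝ (Fin 2)), s.card = 4 →
      tbX ↥s < tdX ↥s → tdX ↥s ≤ Real.sqrt 2 * tbX ↥s) :=
  ⟨fun _ _ => exists_plane_card_eq_four_tbX_eq_tdX_eq,
    fun s hs => tdX_le_sqrt_two_mul_tbX (EuclideanGeometry.isPtolemaic.subtype _)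
      (by simp [hs])⟩
end
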